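/- Noether theorem for vector-valued optimal control systems: let L = (L₁,…,L_N) : ℝ×ℝⁿ×ℝʳ → ℝ^N and φ : ℝ×ℝⁿ×ℝʳ → ℝⁿ be continuously differentiable, Ω ⊆ ℝʳ, and let x : [a,b] → ℝⁿ, u : [a,b] → Ω ⊆ ℝʳ, ψ : [a,b] → ℝⁿ be continuously differentiable and λ ∈ ℝ^N, satisfying for all t ∈ [a,b]: (i) ẋ(t) = φ(t,x(t),u(t)); (ii) ψ̇(t) = −∂𝓗/∂y (t,x(t),u(t),ψ(t),λ), where 𝓗(t,y,v,p,λ) = λ·L(t,y,v) + p·φ(t,y,v); (iii) 𝓗(t,x(t),u(t),ψ(t),λ) = max_{v ∈ Ω} 𝓗(t,x(t),v,ψ(t),λ); (iv) t ↦ 𝓗(t,x(t),u(t),ψ(t),λ) is differentiable with derivative equal to ∂𝓗/∂t (t,x(t),u(t),ψ(t),λ). Suppose there exists a C² one-parameter family of transformations (T,X,U) with (T,X,U)(t,y,v,0) = (t,y,v), such that U(t,x(t),u(t),s) ∈ Ω for all t ∈ [a,b] and s ∈ (−ε,ε), and such that for all t ∈ [a,b] and s ∈ (−ε,ε) the invariance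 conditions hold: (d/dt)[τ ↦ X(τ,x(τ),u(τ),s)](t) = φ(h^s(t,x(t),u(t))) · (d/dt)[τ ↦ T(τ,x(τ),u(τ),s)](t), and L(t,x(t),u(t)) = L(h^s(t,x(t),u(t))) · (d/dt)[τ ↦ T(τ,x(τ),u(τ),s)](t) (componentwise, for each of the N components of L), where h^s(t,y,v) = (T(t,y,v,s), X(t,y,v,s), U(t,y,v,s)). Then the function t ↦ ψ(t)·∂X/∂s(t,x(t),u(t),0) − 𝓗(t,x(t),u(t),ψ(t),λ)·∂T/∂s(t,x(t),u(t),0) is constant on [a,b]; that is, it is an unimprovable (Pareto) conservation law for the vector-valued problem (P). -/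

import Mathlib

open Set

noncomputable section

/-- Euclidean dot product on `Fin d → ℝ`. -/
def edot {d : ℕ} (p q : Fin d → ℝ) : ℝ := ∑ i, p i * q i

/-- The Hamiltonian `𝓗(t,y,v,p,λ) = λ·L(t,y,v) + p·φ(t,y,v)` of the
vector-valued optimal control problem `(P)`. -/
def HamP {n r N : ℕ}
    (L : ℝ → (Fin n → ℝ) → (Fin r → ℝ) → (Fin N → ℝ))
    (φ : ℝ → (Fin n → ℝ) → (Fin r → ℝ) → (Fin n → ℝ))
    (t : ℝ) (y : Fin n → ℝ) (v : Fin r → ℝ)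
    (p : Fin n → ℝ) (lam : Fin N → ℝ) : ℝ :=
  edot lam (L t y v) + edot p (φ t y v)

/-!
Write `∂ₛ` for `∂/∂s` at `s = 0` along the extremal and `F = ψ·∂ₛX − 𝓗 ∂ₛT`. By the adjoint
equation and (iv), `ψ̇·∂ₛX + 𝓗̇ ∂ₛT = −∂𝓗(∂ₛT, ∂ₛX, 0)`. Since second derivatives of `C²` maps
are symmetric, `d/dt ∂ₛ = ∂ₛ d/dt`, so differentiating the two invariance identities in `s` gives
`d/dt ∂ₛX = ∂φ(∂ₛT, ∂ₛX, ∂ₛU) + (d/dt ∂ₛT) φ` and `0 = ∂L(∂ₛT, ∂ₛX, ∂ₛU) + (d/dt ∂ₛT) L`, while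
the maximality condition forces `∂𝓗(0, 0, ∂ₛU) = 0`. Adding up, `Ḟ = 0`, so `F` is constant.
-/

open Filter Topology

section Curves

variable {Y V G : Type*} [NormedAddCommGroup Y] [NormedSpace ℝ Y]
  [NormedAddCommGroup V] [NormedSpace ℝ V] [NormedAddCommGroup G] [NormedSpace ℝ G]

def uncurry3 (f : ℝ → Y → V → G) (e : ℝ × Y × V) : G := f e.1 e.2.1 e.2.2

def uncurry4 (f : ℝ → Y → V → ℝ → G) (q : ℝ × Y × V × ℝ) : G := f q.1 q.2.1 q.2.2.1 q.2.2.2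

lemma HasFDerivAt.hasDerivAt_comp_fst {f : ℝ × Y × V → G} {f' : ℝ × Y × V →L[ℝ] G}
    {t : ℝ} {y : Y} {v : V} (hf : HasFDerivAt f f' (t, y, v)) :
    HasDerivAt (fun τ => f (τ, y, v)) (f' (1, 0, 0)) t :=
  hf.comp_hasDerivAt t ((hasDerivAt_id t).prodMk
    ((hasDerivAt_const t y).prodMk (hasDerivAt_const t v)))

lemma HasFDerivAt.fderiv_comp_snd_apply {f : ℝ × Y × V → G} {f' : ℝ × Y × V →L[ℝ] G}
    {t : ℝ} {y : Y} {v : V} (hf : HasFDerivAt f f' (t, y, v)) (z : Y) :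
    fderiv ℝ (fun y' => f (t, y', v)) y z = f' (0, z, 0) := by
  have hy : HasFDerivAt (fun y' => f (t, y', v))
      (f'.comp ((0 : Y →L[ℝ] ℝ).prod ((ContinuousLinearMap.id ℝ Y).prod 0))) y :=
    hf.comp y ((hasFDerivAt_const t y).prodMk ((hasFDerivAt_id y).prodMk (hasFDerivAt_const v y)))
  rw [hy.fderiv]
  simp

lemma HasFDerivAt.eq_zero_of_isLocalMax_comp_thd {f : ℝ × Y × V → ℝ}
    {f' : ℝ × Y × V →L[ℝ] ℝ} {t : ℝ} {y : Y} {v : V} {c : ℝ → V} {c' : V} {s : ℝ}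
    (hf : HasFDerivAt f f' (t, y, v)) (hc : HasDerivAt c c' s) (hcs : c s = v)
    (hmax : IsLocalMax (fun s => f (t, y, c s)) s) :
    f' (0, 0, c') = 0 := by
  subst hcs
  exact hmax.hasDerivAt_eq_zero
    (hf.comp_hasDerivAt s ((hasDerivAt_const s t).prodMk ((hasDerivAt_const s y).prodMk hc)))

lemma HasFDerivAt.hasDerivWithinAt_comp_curve {f : ℝ × Y × V × ℝ → G}
    {f' : ℝ × Y × V × ℝ →L[ℝ] G} {x : ℝ → Y} {u : ℝ → V} {x' : Y} {u' : V} {S : Set ℝ}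
    {t s : ℝ} (hf : HasFDerivAt f f' (t, x t, u t, s)) (hx : HasDerivWithinAt x x' S t)
    (hu : HasDerivWithinAt u u' S t) :
    HasDerivWithinAt (fun τ => f (τ, x τ, u τ, s)) (f' (1, x', u', 0)) S t :=
  hf.comp_hasDerivWithinAt t ((hasDerivWithinAt_id t S).prodMk
    (hx.prodMk (hu.prodMk (hasDerivWithinAt_const t S s))))

lemma eventually_derivWithin_comp_curve {f : ℝ × Y × V × ℝ → G} {x : ℝ → Y} {u : ℝ → V}
    {x' : Y} {u' : V} {S : Set ℝ} {t : ℝ} {l : Filter ℝ} (hS : UniqueDiffWithinAt ℝ S t)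
    (hx : HasDerivWithinAt x x' S t) (hu : HasDerivWithinAt u u' S t)
    (hf : ∀ᶠ s in l, DifferentiableAt ℝ f (t, x t, u t, s)) :
    ∀ᶠ s in l, derivWithin (fun τ => f (τ, x τ, u τ, s)) S t =
      fderiv ℝ f (t, x t, u t, s) (1, x', u', 0) :=
  hf.mono fun _ hs => (hs.hasFDerivAt.hasDerivWithinAt_comp_curve hx hu).derivWithin hS

lemma HasFDerivAt.hasDerivAt_comp_param {f : ℝ × Y × V × ℝ → G}
    {f' : ℝ × Y × V × ℝ →L[ℝ] G} {t : ℝ} {y : Y} {v : V} {s : ℝ}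
    (hf : HasFDerivAt f f' (t, y, v, s)) :
    HasDerivAt (fun s => f (t, y, v, s)) (f' (0, 0, 0, 1)) s :=
  hf.comp_hasDerivAt s ((hasDerivAt_const s t).prodMk
    ((hasDerivAt_const s y).prodMk ((hasDerivAt_const s v).prodMk (hasDerivAt_id s))))

lemma deriv_param_eq_fderiv {f : ℝ → Y → V → ℝ → G} {t : ℝ} {y : Y} {v : V} {s : ℝ}
    (hf : DifferentiableAt ℝ (uncurry4 f) (t, y, v, s)) :
    deriv (f t y v) s = fderiv ℝ (uncurry4 f) (t, y, v, s) (0, 0, 0, 1) :=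
  hf.hasFDerivAt.hasDerivAt_comp_param.deriv

lemma ContDiffOn.eventually_contDiffAt_param {f : ℝ × Y × V × ℝ → G} {k : WithTop ℕ∞}
    {I : Set ℝ} {s₀ : ℝ} (hf : ContDiffOn ℝ k f (univ ×ˢ univ ×ˢ univ ×ˢ I)) (hI : IsOpen I)
    (hs₀ : s₀ ∈ I) (t : ℝ) (y : Y) (v : V) :
    ∀ᶠ s in 𝓝 s₀, ContDiffAt ℝ k f (t, y, v, s) := by
  filter_upwards [hI.mem_nhds hs₀] with s hs
  exact hf.contDiffAt (prod_mem_nhds univ_mem (prod_mem_nhds univ_mem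
    (prod_mem_nhds univ_mem (hI.mem_nhds hs))))

end Curves

section SecondDerivative

variable {Y V E G : Type*} [NormedAddCommGroup Y] [NormedSpace ℝ Y]
  [NormedAddCommGroup V] [NormedSpace ℝ V] [NormedAddCommGroup E] [NormedSpace ℝ E]
  [NormedAddCommGroup G] [NormedSpace ℝ G]

lemma ContDiffAt.hasFDerivAt_fderiv_apply {f : E → G} {q : E} (hf : ContDiffAt ℝ 2 f q)
    (w : E) : HasFDerivAt (fun p => fderiv ℝ f p w) ((fderiv ℝ (fderiv ℝ f) q).flip w) q := by
  have h : HasFDerivAt (fderiv ℝ f) (fderiv ℝ (fderiv ℝ f) q) q :=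
    ((hf.fderiv_right (by norm_num)).differentiableAt one_ne_zero).hasFDerivAt
  exact (ContinuousLinearMap.apply ℝ G w).hasFDerivAt.comp q h

/-- Symmetry of `f''` puts the `s`-derivative of `p ↦ f' p w` in the form `f'' w (0, 0, 0, 1)`,
which is the derivative of `p ↦ f' p (0, 0, 0, 1)` in the direction `w`. -/
lemma ContDiffAt.hasDerivAt_fderiv_apply_param {f : ℝ × Y × V × ℝ → G} {t : ℝ} {y : Y}
    {v : V} {s : ℝ} (hf : ContDiffAt ℝ 2 f (t, y, v, s)) (w : ℝ × Y × V × ℝ) :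
    HasDerivAt (fun s => fderiv ℝ f (t, y, v, s) w)
      (fderiv ℝ (fderiv ℝ f) (t, y, v, s) w (0, 0, 0, 1)) s := by
  have h := (hf.hasFDerivAt_fderiv_apply w).hasDerivAt_comp_param
  rwa [ContinuousLinearMap.flip_apply, (hf.isSymmSndFDerivAt (by simp)).eq] at h

lemma HasDerivAt.eq_of_eventuallyEq_fderiv_smul_comp {T : ℝ × Y × V × ℝ → ℝ} {K : E → G}
    {g : ℝ → G} {g' : G} {h : ℝ → E} {h' : E} {t : ℝ} {y : Y} {v : V} {w : ℝ × Y × V × ℝ}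
    (hg : HasDerivAt g g' 0) (hT : ContDiffAt ℝ 2 T (t, y, v, 0))
    (hT1 : fderiv ℝ T (t, y, v, 0) w = 1) (hK : DifferentiableAt ℝ K (h 0))
    (hh : HasDerivAt h h' 0) (hinv : g =ᶠ[𝓝 0] fun s => fderiv ℝ T (t, y, v, s) w • K (h s)) :
    g' = fderiv ℝ K (h 0) h' + fderiv ℝ (fderiv ℝ T) (t, y, v, 0) w (0, 0, 0, 1) • K (h 0) := by
  have h := hg.unique (((hT.hasDerivAt_fderiv_apply_param w).smul
    (hK.hasFDerivAt.comp_hasDerivAt 0 hh)).congr_of_eventuallyEq hinv)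
  rwa [hT1, one_smul] at h

end SecondDerivative

section DotProduct

variable {ι : Type*} [Fintype ι]

def dotProductCLM (p : ι → ℝ) : (ι → ℝ) →L[ℝ] ℝ :=
  LinearMap.toContinuousLinearMap (dotProductBilin ℝ ℝ p)

lemma HasDerivWithinAt.dotProduct {p q : ℝ → ι → ℝ} {p' q' : ι → ℝ} {S : Set ℝ} {t : ℝ}
    (hp : HasDerivWithinAt p p' S t) (hq : HasDerivWithinAt q q' S t) :
    HasDerivWithinAt (fun τ => p τ ⬝ᵥ q τ) (p' ⬝ᵥ q t + p t ⬝ᵥ q') S t :=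
  (HasDerivWithinAt.fun_sum (u := Finset.univ) fun i _ =>
    (hasDerivWithinAt_pi.1 hp i).mul (hasDerivWithinAt_pi.1 hq i)).congr_deriv
      Finset.sum_add_distrib

lemma dotProduct_apply_single [DecidableEq ι] (B : (ι → ℝ) →L[ℝ] ℝ) (z : ι → ℝ) :
    (fun i => B (Pi.single i 1)) ⬝ᵥ z = B z := by
  conv_rhs => rw [pi_eq_sum_univ' z]
  simp [dotProduct, mul_comm]

lemma noether_identity {μ V : Type*} [Fintype μ] [NormedAddCommGroup V] [NormedSpace ℝ V]
    {A : ℝ × (ι → ℝ) × V →L[ℝ] ℝ} {DL : ℝ × (ι → ℝ) × V →L[ℝ] (μ → ℝ)}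
    {Dφ : ℝ × (ι → ℝ) × V →L[ℝ] (ι → ℝ)} {p φ₀ Xs Xdot : ι → ℝ} {lam L₀ : μ → ℝ}
    {Ts Tdot : ℝ} {Us : V} (hA : ∀ w, A w = lam ⬝ᵥ DL w + p ⬝ᵥ Dφ w)
    (hX : Xdot = Dφ (Ts, Xs, Us) + Tdot • φ₀) (hL : 0 = DL (Ts, Xs, Us) + Tdot • L₀)
    (hU : A (0, 0, Us) = 0) :
    -A (0, Xs, 0) + p ⬝ᵥ Xdot - (A (1, 0, 0) * Ts + (lam ⬝ᵥ L₀ + p ⬝ᵥ φ₀) * Tdot) = 0 := by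
  have hsplit : A (Ts, Xs, Us) = Ts * A (1, 0, 0) + A (0, Xs, 0) + A (0, 0, Us) := by
    rw [← smul_eq_mul, ← map_smul, ← map_add, ← map_add]
    simp
  have hlam := congrArg (lam ⬝ᵥ ·) hL
  simp only [dotProduct_zero, dotProduct_add, dotProduct_smul, smul_eq_mul] at hlam
  rw [hX, dotProduct_add, dotProduct_smul, smul_eq_mul]
  linarith [hA (Ts, Xs, Us)]

end DotProduct

lemma hasFDerivAt_uncurry_hamP {n r N : ℕ} {L : ℝ → (Fin n → ℝ) → (Fin r → ℝ) → (Fin N → ℝ)}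
    {φ : ℝ → (Fin n → ℝ) → (Fin r → ℝ) → (Fin n → ℝ)} {e : ℝ × (Fin n → ℝ) × (Fin r → ℝ)}
    {DL : ℝ × (Fin n → ℝ) × (Fin r → ℝ) →L[ℝ] (Fin N → ℝ)}
    {Dφ : ℝ × (Fin n → ℝ) × (Fin r → ℝ) →L[ℝ] (Fin n → ℝ)}
    (hL : HasFDerivAt (uncurry3 L) DL e) (hφ : HasFDerivAt (uncurry3 φ) Dφ e)
    (p : Fin n → ℝ) (lam : Fin N → ℝ) :
    HasFDerivAt (uncurry3 fun t y v => HamP L φ t y v p lam)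
      ((dotProductCLM lam).comp DL + (dotProductCLM p).comp Dφ) e :=
  ((dotProductCLM lam).hasFDerivAt.comp e hL).add ((dotProductCLM p).hasFDerivAt.comp e hφ)

lemma eq_of_hasDerivWithinAt_zero_Icc {G : Type*} [NormedAddCommGroup G] [NormedSpace ℝ G]
    {f : ℝ → G} {a b : ℝ} (hf : ∀ t ∈ Icc a b, HasDerivWithinAt f 0 (Icc a b) t) :
    ∀ t ∈ Icc a b, f t = f a :=
  constant_of_has_deriv_right_zero (fun t ht => (hf t ht).continuousWithinAt) fun t ht =>
    (hf t (Ico_subset_Icc_self ht)).mono_of_mem_nhdsWithin (Icc_mem_nhdsGE_of_mem ht)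

theorem infinitesimal_invariance {Y V W : Type*} [NormedAddCommGroup Y] [NormedSpace ℝ Y]
    [NormedAddCommGroup V] [NormedSpace ℝ V] [NormedAddCommGroup W] [NormedSpace ℝ W]
    {L : ℝ → Y → V → W} {φ : ℝ → Y → V → Y} {x : ℝ → Y} {u : ℝ → V}
    {T : ℝ → Y → V → ℝ → ℝ} {X : ℝ → Y → V → ℝ → Y} {U : ℝ → Y → V → ℝ → V}
    {S : Set ℝ} {t : ℝ} {x' : Y} {u' : V} (hS : UniqueDiffWithinAt ℝ S t)
    (hL : DifferentiableAt ℝ (uncurry3 L) (t, x t, u t))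
    (hφ : DifferentiableAt ℝ (uncurry3 φ) (t, x t, u t))
    (hx : HasDerivWithinAt x x' S t) (hu : HasDerivWithinAt u u' S t)
    (hT : ∀ᶠ s in 𝓝 0, ContDiffAt ℝ 2 (uncurry4 T) (t, x t, u t, s))
    (hX : ∀ᶠ s in 𝓝 0, ContDiffAt ℝ 2 (uncurry4 X) (t, x t, u t, s))
    (hU : DifferentiableAt ℝ (uncurry4 U) (t, x t, u t, 0))
    (hid : ∀ τ y v, T τ y v 0 = τ ∧ X τ y v 0 = y ∧ U τ y v 0 = v)
    (hinvX : ∀ᶠ s in 𝓝 0,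
      derivWithin (fun τ => X τ (x τ) (u τ) s) S t =
        derivWithin (fun τ => T τ (x τ) (u τ) s) S t •
          φ (T t (x t) (u t) s) (X t (x t) (u t) s) (U t (x t) (u t) s))
    (hinvL : ∀ᶠ s in 𝓝 0,
      L t (x t) (u t) =
        derivWithin (fun τ => T τ (x τ) (u τ) s) S t •
          L (T t (x t) (u t) s) (X t (x t) (u t) s) (U t (x t) (u t) s)) :
    fderiv ℝ (fderiv ℝ (uncurry4 X)) (t, x t, u t, 0) (1, x', u', 0) (0, 0, 0, 1) =
        fderiv ℝ (uncurry3 φ) (t, x t, u t)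
          (fderiv ℝ (uncurry4 T) (t, x t, u t, 0) (0, 0, 0, 1),
            fderiv ℝ (uncurry4 X) (t, x t, u t, 0) (0, 0, 0, 1),
            fderiv ℝ (uncurry4 U) (t, x t, u t, 0) (0, 0, 0, 1)) +
        fderiv ℝ (fderiv ℝ (uncurry4 T)) (t, x t, u t, 0) (1, x', u', 0)
          (0, 0, 0, 1) • φ t (x t) (u t) ∧
      0 = fderiv ℝ (uncurry3 L) (t, x t, u t)
          (fderiv ℝ (uncurry4 T) (t, x t, u t, 0) (0, 0, 0, 1),
            fderiv ℝ (uncurry4 X) (t, x t, u t, 0) (0, 0, 0, 1),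
            fderiv ℝ (uncurry4 U) (t, x t, u t, 0) (0, 0, 0, 1)) +
        fderiv ℝ (fderiv ℝ (uncurry4 T)) (t, x t, u t, 0) (1, x', u', 0)
          (0, 0, 0, 1) • L t (x t) (u t) := by
  obtain ⟨hT0, hX0, hU0⟩ := hid t (x t) (u t)
  have hT₀ : ContDiffAt ℝ 2 (uncurry4 T) (t, x t, u t, 0) := hT.self_of_nhds
  have hX₀ : ContDiffAt ℝ 2 (uncurry4 X) (t, x t, u t, 0) := hX.self_of_nhds
  have hTcurve := eventually_derivWithin_comp_curve hS hx hu
    (hT.mono fun _ hs => hs.differentiableAt two_ne_zero)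
  have hXcurve := eventually_derivWithin_comp_curve hS hx hu
    (hX.mono fun _ hs => hs.differentiableAt two_ne_zero)
  have hT1 : fderiv ℝ (uncurry4 T) (t, x t, u t, 0) (1, x', u', 0) = 1 :=
    hS.eq_deriv _ ((hT₀.differentiableAt two_ne_zero).hasFDerivAt.hasDerivWithinAt_comp_curve hx hu)
      ((hasDerivWithinAt_id t S).congr (fun τ _ => (hid τ _ _).1) hT0)
  have hh : HasDerivAt (fun s => (T t (x t) (u t) s, X t (x t) (u t) s, U t (x t) (u t) s))
      (fderiv ℝ (uncurry4 T) (t, x t, u t, 0) (0, 0, 0, 1),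
        fderiv ℝ (uncurry4 X) (t, x t, u t, 0) (0, 0, 0, 1),
        fderiv ℝ (uncurry4 U) (t, x t, u t, 0) (0, 0, 0, 1)) 0 :=
    (hT₀.differentiableAt two_ne_zero).hasFDerivAt.hasDerivAt_comp_param.prodMk
      ((hX₀.differentiableAt two_ne_zero).hasFDerivAt.hasDerivAt_comp_param.prodMk
        hU.hasFDerivAt.hasDerivAt_comp_param)
  have hh0 : (T t (x t) (u t) 0, X t (x t) (u t) 0, U t (x t) (u t) 0) = (t, x t, u t) := by
    rw [hT0, hX0, hU0]
  have hXdot := (hX₀.hasDerivAt_fderiv_apply_param _).eq_of_eventuallyEq_fderiv_smul_comp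
    hT₀ hT1 (hh0 ▸ hφ) hh <| by
      filter_upwards [hinvX, hTcurve, hXcurve] with s hs hTs hXs
      rwa [← hTs, ← hXs]
  have hLdot := (hasDerivAt_const 0 (L t (x t) (u t))).eq_of_eventuallyEq_fderiv_smul_comp
    hT₀ hT1 (hh0 ▸ hL) hh <| by
      filter_upwards [hinvL, hTcurve] with s hs hTs
      rwa [← hTs]
  rw [hh0] at hXdot hLdot
  exact ⟨hXdot, hLdot⟩

theorem hasDerivWithinAt_noether_charge_zero {n r N : ℕ}
    {L : ℝ → (Fin n → ℝ) → (Fin r → ℝ) → (Fin N → ℝ)}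
    {φ : ℝ → (Fin n → ℝ) → (Fin r → ℝ) → (Fin n → ℝ)}
    {x : ℝ → Fin n → ℝ} {u : ℝ → Fin r → ℝ} {ψ : ℝ → Fin n → ℝ} {lam : Fin N → ℝ}
    {T : ℝ → (Fin n → ℝ) → (Fin r → ℝ) → ℝ → ℝ}
    {X : ℝ → (Fin n → ℝ) → (Fin r → ℝ) → ℝ → (Fin n → ℝ)}
    {U : ℝ → (Fin n → ℝ) → (Fin r → ℝ) → ℝ → (Fin r → ℝ)}
    {S : Set ℝ} {t : ℝ} {x' : Fin n → ℝ} {u' : Fin r → ℝ} (hS : UniqueDiffWithinAt ℝ S t)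
    (hL : DifferentiableAt ℝ (uncurry3 L) (t, x t, u t))
    (hφ : DifferentiableAt ℝ (uncurry3 φ) (t, x t, u t))
    (hx : HasDerivWithinAt x x' S t) (hu : HasDerivWithinAt u u' S t)
    (hψ : HasDerivWithinAt ψ
      (fun i => -(fderiv ℝ (fun y => HamP L φ t y (u t) (ψ t) lam) (x t) (Pi.single i 1))) S t)
    (hH : HasDerivWithinAt (fun τ => HamP L φ τ (x τ) (u τ) (ψ τ) lam)
      (deriv (fun τ => HamP L φ τ (x t) (u t) (ψ t) lam) t) S t)
    (hmax : ∀ᶠ s in 𝓝 0,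
      HamP L φ t (x t) (U t (x t) (u t) s) (ψ t) lam ≤ HamP L φ t (x t) (u t) (ψ t) lam)
    (hT : ∀ᶠ s in 𝓝 0, ContDiffAt ℝ 2 (uncurry4 T) (t, x t, u t, s))
    (hX : ∀ᶠ s in 𝓝 0, ContDiffAt ℝ 2 (uncurry4 X) (t, x t, u t, s))
    (hU : DifferentiableAt ℝ (uncurry4 U) (t, x t, u t, 0))
    (hid : ∀ (τ : ℝ) (y : Fin n → ℝ) (v : Fin r → ℝ),
      T τ y v 0 = τ ∧ X τ y v 0 = y ∧ U τ y v 0 = v)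
    (hinvX : ∀ᶠ s in 𝓝 0,
      derivWithin (fun τ => X τ (x τ) (u τ) s) S t =
        derivWithin (fun τ => T τ (x τ) (u τ) s) S t •
          φ (T t (x t) (u t) s) (X t (x t) (u t) s) (U t (x t) (u t) s))
    (hinvL : ∀ᶠ s in 𝓝 0,
      L t (x t) (u t) =
        derivWithin (fun τ => T τ (x τ) (u τ) s) S t •
          L (T t (x t) (u t) s) (X t (x t) (u t) s) (U t (x t) (u t) s)) :
    HasDerivWithinAt (fun τ => ψ τ ⬝ᵥ fderiv ℝ (uncurry4 X) (τ, x τ, u τ, 0) (0, 0, 0, 1) -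
      HamP L φ τ (x τ) (u τ) (ψ τ) lam * fderiv ℝ (uncurry4 T) (τ, x τ, u τ, 0) (0, 0, 0, 1))
      0 S t := by
  have hT₀ : ContDiffAt ℝ 2 (uncurry4 T) (t, x t, u t, 0) := hT.self_of_nhds
  have hX₀ : ContDiffAt ℝ 2 (uncurry4 X) (t, x t, u t, 0) := hX.self_of_nhds
  obtain ⟨hXdot, hLdot⟩ := infinitesimal_invariance hS hL hφ hx hu hT hX hU hid hinvX hinvL
  have hA := hasFDerivAt_uncurry_hamP hL.hasFDerivAt hφ.hasFDerivAt (ψ t) lam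
  have hU0 : U t (x t) (u t) 0 = u t := (hid t (x t) (u t)).2.2
  have hUs := hA.eq_zero_of_isLocalMax_comp_thd hU.hasFDerivAt.hasDerivAt_comp_param hU0
    (by simpa only [IsLocalMax, IsMaxFilter, uncurry3, uncurry4, hU0] using hmax)
  have hHt : deriv (fun τ => HamP L φ τ (x t) (u t) (ψ t) lam) t = _ :=
    hA.hasDerivAt_comp_fst.deriv
  set B := fderiv ℝ (fun y => HamP L φ t y (u t) (ψ t) lam) (x t)
  have hB : ∀ z, B z = _ := hA.fderiv_comp_snd_apply
  have hψ' : HasDerivWithinAt ψ (-fun i => B (Pi.single i 1)) S t := hψ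
  have hF := (hψ'.dotProduct
    ((hX₀.hasFDerivAt_fderiv_apply (0, 0, 0, 1)).hasDerivWithinAt_comp_curve hx hu)).sub
      (hH.mul ((hT₀.hasFDerivAt_fderiv_apply (0, 0, 0, 1)).hasDerivWithinAt_comp_curve hx hu))
  rw [neg_dotProduct, dotProduct_apply_single, hB, hHt] at hF
  exact hF.congr_deriv (noether_identity (fun _ => rfl) hXdot hLdot hUs)

theorem noether_vector_valued_optimal_control_general
    {n r N : ℕ} {a b : ℝ} (hab : a < b)
    (L : ℝ → (Fin n → ℝ) → (Fin r → ℝ) → (Fin N → ℝ))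
    (φ : ℝ → (Fin n → ℝ) → (Fin r → ℝ) → (Fin n → ℝ))
    (Ω : Set (Fin r → ℝ))
    (hL : ContDiff ℝ 1 fun q : ℝ × (Fin n → ℝ) × (Fin r → ℝ) => L q.1 q.2.1 q.2.2)
    (hφ : ContDiff ℝ 1 fun q : ℝ × (Fin n → ℝ) × (Fin r → ℝ) => φ q.1 q.2.1 q.2.2)
    (x : ℝ → Fin n → ℝ) (u : ℝ → Fin r → ℝ) (ψ : ℝ → Fin n → ℝ)
    (lam : Fin N → ℝ)
    (hu : ContDiffOn ℝ 1 u (Icc a b))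
    -- (i) the control system `ẋ(t) = φ(t,x(t),u(t))`
    (hi : ∀ t ∈ Icc a b, HasDerivWithinAt x (φ t (x t) (u t)) (Icc a b) t)
    -- (ii) the adjoint system `ψ̇(t) = -∂𝓗/∂y (t,x(t),u(t),ψ(t),λ)`
    (hii : ∀ t ∈ Icc a b,
      HasDerivWithinAt ψ
        (fun i => -(fderiv ℝ (fun y => HamP L φ t y (u t) (ψ t) lam) (x t)
          (Pi.single i 1))) (Icc a b) t)
    -- (iii) the maximality condition
    (hiii : ∀ t ∈ Icc a b, ∀ v ∈ Ω,
      HamP L φ t (x t) v (ψ t) lam ≤ HamP L φ t (x t) (u t) (ψ t) lam)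
    -- (iv) `d𝓗/dt = ∂𝓗/∂t` along the extremal
    (hiv : ∀ t ∈ Icc a b,
      HasDerivWithinAt (fun τ => HamP L φ τ (x τ) (u τ) (ψ τ) lam)
        (deriv (fun τ => HamP L φ τ (x t) (u t) (ψ t) lam) t) (Icc a b) t)
    -- the `C²` one-parameter family of transformations `h^s = (T,X,U)`
    (ε : ℝ) (hε : 0 < ε)
    (T : ℝ → (Fin n → ℝ) → (Fin r → ℝ) → ℝ → ℝ)
    (X : ℝ → (Fin n → ℝ) → (Fin r → ℝ) → ℝ → (Fin n → ℝ))
    (U : ℝ → (Fin n → ℝ) → (Fin r → ℝ) → ℝ → (Fin r → ℝ))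
    (hT : ContDiffOn ℝ 2
      (fun q : ℝ × (Fin n → ℝ) × (Fin r → ℝ) × ℝ => T q.1 q.2.1 q.2.2.1 q.2.2.2)
      (univ ×ˢ univ ×ˢ univ ×ˢ Ioo (-ε) ε))
    (hX : ContDiffOn ℝ 2
      (fun q : ℝ × (Fin n → ℝ) × (Fin r → ℝ) × ℝ => X q.1 q.2.1 q.2.2.1 q.2.2.2)
      (univ ×ˢ univ ×ˢ univ ×ˢ Ioo (-ε) ε))
    (hU : ContDiffOn ℝ 2
      (fun q : ℝ × (Fin n → ℝ) × (Fin r → ℝ) × ℝ => U q.1 q.2.1 q.2.2.1 q.2.2.2)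
      (univ ×ˢ univ ×ˢ univ ×ˢ Ioo (-ε) ε))
    -- at `s = 0` the family reduces to the identity transformation
    (hid : ∀ (t : ℝ) (y : Fin n → ℝ) (v : Fin r → ℝ),
      T t y v 0 = t ∧ X t y v 0 = y ∧ U t y v 0 = v)
    -- the transformed control takes values in `Ω`
    (hUΩ : ∀ t ∈ Icc a b, ∀ s ∈ Ioo (-ε) ε, U t (x t) (u t) s ∈ Ω)
    -- invariance of the dynamics
    (hinvX : ∀ t ∈ Icc a b, ∀ s ∈ Ioo (-ε) ε,
      derivWithin (fun τ => X τ (x τ) (u τ) s) (Icc a b) t =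
        (derivWithin (fun τ => T τ (x τ) (u τ) s) (Icc a b) t) •
          φ (T t (x t) (u t) s) (X t (x t) (u t) s) (U t (x t) (u t) s))
    -- componentwise invariance of the vector-valued Lagrangian `L = (L₁,…,L_N)`
    (hinvL : ∀ t ∈ Icc a b, ∀ s ∈ Ioo (-ε) ε,
      L t (x t) (u t) =
        (derivWithin (fun τ => T τ (x τ) (u τ) s) (Icc a b) t) •
          L (T t (x t) (u t) s) (X t (x t) (u t) s) (U t (x t) (u t) s)) :
    -- conclusion: the unimprovable (Pareto) conservation law
    ∃ C : ℝ, ∀ t ∈ Icc a b,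
      edot (ψ t) (deriv (fun s => X t (x t) (u t) s) 0) -
        HamP L φ t (x t) (u t) (ψ t) lam *
          deriv (fun s => T t (x t) (u t) s) 0 = C := by
  have hs : ∀ᶠ s in 𝓝 (0 : ℝ), s ∈ Ioo (-ε) ε := Ioo_mem_nhds (neg_neg_of_pos hε) hε
  have hT' : ∀ t y v, ∀ᶠ s in 𝓝 0, ContDiffAt ℝ 2 (uncurry4 T) (t, y, v, s) :=
    hT.eventually_contDiffAt_param isOpen_Ioo hs.self_of_nhds
  have hX' : ∀ t y v, ∀ᶠ s in 𝓝 0, ContDiffAt ℝ 2 (uncurry4 X) (t, y, v, s) :=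
    hX.eventually_contDiffAt_param isOpen_Ioo hs.self_of_nhds
  have hU' : ∀ t y v, ∀ᶠ s in 𝓝 0, ContDiffAt ℝ 2 (uncurry4 U) (t, y, v, s) :=
    hU.eventually_contDiffAt_param isOpen_Ioo hs.self_of_nhds
  have hconst := eq_of_hasDerivWithinAt_zero_Icc fun t ht =>
    hasDerivWithinAt_noether_charge_zero (uniqueDiffOn_Icc hab t ht)
      (hL.differentiable one_ne_zero _) (hφ.differentiable one_ne_zero _) (hi t ht)
      (hu.differentiableOn one_ne_zero t ht).hasDerivWithinAt (hii t ht) (hiv t ht)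
      (hs.mono fun s hs => hiii t ht _ (hUΩ t ht s hs)) (hT' t _ _) (hX' t _ _)
      ((hU' t _ _).self_of_nhds.differentiableAt two_ne_zero) hid
      (hs.mono (hinvX t ht)) (hs.mono (hinvL t ht))
  exact ⟨_, fun t ht => by
    rw [deriv_param_eq_fderiv ((hX' t _ _).self_of_nhds.differentiableAt two_ne_zero),
      deriv_param_eq_fderiv ((hT' t _ _).self_of_nhds.differentiableAt two_ne_zero)]
    exact hconst t ht⟩

/-- **Noether's theorem for vector-valued optimal control systems.**
If `(x,u,ψ,λ)` satisfies the conclusions of the general theorem of optimal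
control (necessary conditions for Pareto optimality of the multiobjective
problem `(P)`) and the problem is invariant under a `C²` one-parameter family
of transformations `h^s = (T,X,U)`, then
`ψ(t)·∂X/∂s|₀ − 𝓗(t,x(t),u(t),ψ(t),λ) ∂T/∂s|₀` is constant on `[a,b]`:
an unimprovable (Pareto) conservation law for `(P)`. -/
theorem noether_vector_valued_optimal_control
    {n r N : ℕ} {a b : ℝ} (hab : a < b)
    (L : ℝ → (Fin n → ℝ) → (Fin r → ℝ) → (Fin N → ℝ))
    (φ : ℝ → (Fin n → ℝ) → (Fin r → ℝ) → (Fin n → ℝ))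
    (Ω : Set (Fin r → ℝ))
    (hL : ContDiff ℝ 1 fun q : ℝ × (Fin n → ℝ) × (Fin r → ℝ) => L q.1 q.2.1 q.2.2)
    (hφ : ContDiff ℝ 1 fun q : ℝ × (Fin n → ℝ) × (Fin r → ℝ) => φ q.1 q.2.1 q.2.2)
    (x : ℝ → Fin n → ℝ) (u : ℝ → Fin r → ℝ) (ψ : ℝ → Fin n → ℝ)
    (lam : Fin N → ℝ)
    (hx : ContDiffOn ℝ 1 x (Icc a b)) (hu : ContDiffOn ℝ 1 u (Icc a b))
    (hψ : ContDiffOn ℝ 1 ψ (Icc a b))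
    (huΩ : ∀ t ∈ Icc a b, u t ∈ Ω)
    -- (i) the control system `ẋ(t) = φ(t,x(t),u(t))`
    (hi : ∀ t ∈ Icc a b, HasDerivWithinAt x (φ t (x t) (u t)) (Icc a b) t)
    -- (ii) the adjoint system `ψ̇(t) = -∂𝓗/∂y (t,x(t),u(t),ψ(t),λ)`
    (hii : ∀ t ∈ Icc a b,
      HasDerivWithinAt ψ
        (fun i => -(fderiv ℝ (fun y => HamP L φ t y (u t) (ψ t) lam) (x t)
          (Pi.single i 1))) (Icc a b) t)
    -- (iii) the maximality condition
    (hiii : ∀ t ∈ Icc a b, ∀ v ∈ Ω,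
      HamP L φ t (x t) v (ψ t) lam ≤ HamP L φ t (x t) (u t) (ψ t) lam)
    -- (iv) `d𝓗/dt = ∂𝓗/∂t` along the extremal
    (hiv : ∀ t ∈ Icc a b,
      HasDerivWithinAt (fun τ => HamP L φ τ (x τ) (u τ) (ψ τ) lam)
        (deriv (fun τ => HamP L φ τ (x t) (u t) (ψ t) lam) t) (Icc a b) t)
    -- the `C²` one-parameter family of transformations `h^s = (T,X,U)`
    (ε : ℝ) (hε : 0 < ε)
    (T : ℝ → (Fin n → ℝ) → (Fin r → ℝ) → ℝ → ℝ)
    (X : ℝ → (Fin n → ℝ) → (Fin r → ℝ) → ℝ → (Fin n → ℝ))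
    (U : ℝ → (Fin n → ℝ) → (Fin r → ℝ) → ℝ → (Fin r → ℝ))
    (hT : ContDiffOn ℝ 2
      (fun q : ℝ × (Fin n → ℝ) × (Fin r → ℝ) × ℝ => T q.1 q.2.1 q.2.2.1 q.2.2.2)
      (univ ×ˢ univ ×ˢ univ ×ˢ Ioo (-ε) ε))
    (hX : ContDiffOn ℝ 2
      (fun q : ℝ × (Fin n → ℝ) × (Fin r → ℝ) × ℝ => X q.1 q.2.1 q.2.2.1 q.2.2.2)
      (univ ×ˢ univ ×ˢ univ ×ˢ Ioo (-ε) ε))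
    (hU : ContDiffOn ℝ 2
      (fun q : ℝ × (Fin n → ℝ) × (Fin r → ℝ) × ℝ => U q.1 q.2.1 q.2.2.1 q.2.2.2)
      (univ ×ˢ univ ×ˢ univ ×ˢ Ioo (-ε) ε))
    -- at `s = 0` the family reduces to the identity transformation
    (hid : ∀ (t : ℝ) (y : Fin n → ℝ) (v : Fin r → ℝ),
      T t y v 0 = t ∧ X t y v 0 = y ∧ U t y v 0 = v)
    -- the transformed control takes values in `Ω`
    (hUΩ : ∀ t ∈ Icc a b, ∀ s ∈ Ioo (-ε) ε, U t (x t) (u t) s ∈ Ω)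
    -- invariance of the dynamics
    (hinvX : ∀ t ∈ Icc a b, ∀ s ∈ Ioo (-ε) ε,
      derivWithin (fun τ => X τ (x τ) (u τ) s) (Icc a b) t =
        (derivWithin (fun τ => T τ (x τ) (u τ) s) (Icc a b) t) •
          φ (T t (x t) (u t) s) (X t (x t) (u t) s) (U t (x t) (u t) s))
    -- componentwise invariance of the vector-valued Lagrangian `L = (L₁,…,L_N)`
    (hinvL : ∀ t ∈ Icc a b, ∀ s ∈ Ioo (-ε) ε,
      L t (x t) (u t) =
        (derivWithin (fun τ => T τ (x τ) (u τ) s) (Icc a b) t) •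
          L (T t (x t) (u t) s) (X t (x t) (u t) s) (U t (x t) (u t) s)) :
    -- conclusion: the unimprovable (Pareto) conservation law
    ∃ C : ℝ, ∀ t ∈ Icc a b,
      edot (ψ t) (deriv (fun s => X t (x t) (u t) s) 0) -
        HamP L φ t (x t) (u t) (ψ t) lam *
          deriv (fun s => T t (x t) (u t) s) 0 = C :=
  noether_vector_valued_optimal_control_general hab L φ Ω hL hφ x u ψ lam hu hi hii hiii hiv ε hε T
    X U hT hX hU hid hUΩ hinvX hinvL
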